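/- Let k be a field of characteristic zero, V a finite-dimensional k-vector space, ψ an alternating bilinear form on V, and 𝔏 a Lie subalgebra of the endomorphisms of V. Let δ', δ'' ∈ V be such that N_{δ'} ∈ 𝔏, N_{δ''} ∈ 𝔏, and ψ(δ'', δ') ≠ 0. Then for every vector δ in the linear span of δ' and δ'', the endomorphism N_δ lies in 𝔏. -/

import Mathlib

/-- For a bilinear form `ψ` on `V` and `δ ∈ V`, the endomorphism `N_δ : x ↦ ψ(x, δ) δ`. -/
noncomputable def vanishingCycleEndo {k V : Type*} [Field k] [AddCommGroup V] [Module k V]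
    (ψ : LinearMap.BilinForm k V) (δ : V) : Module.End k V :=
  LinearMap.smulRight (ψ.flip δ) δ

attribute [local instance 100] LieRing.ofAssociativeRing

/-!
Writing `C x = ψ(x, ε) δ + ψ(x, δ) ε`, one has `N_{aδ + bε} = a² N_δ + b² N_ε + ab C`, and for
alternating `ψ` the bracket is `⁅N_δ, N_ε⁆ = ψ(ε, δ) C`. So when `ψ(ε, δ) ≠ 0` the cross term `C`
is a multiple of a bracket of elements of `𝔏`.
-/

section

variable {k V : Type*} [Field k] [AddCommGroup V] [Module k V] (ψ : LinearMap.BilinForm k V)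

@[simp]
theorem vanishingCycleEndo_apply (δ x : V) : vanishingCycleEndo ψ δ x = ψ x δ • δ := rfl

theorem lie_vanishingCycleEndo_apply (halt : ψ.IsAlt) (δ ε x : V) :
    ⁅vanishingCycleEndo ψ δ, vanishingCycleEndo ψ ε⁆ x =
      ψ ε δ • (ψ x ε • δ + ψ x δ • ε) := by
  have hswap : ψ δ ε = -ψ ε δ := (halt.neg_eq ε δ).symm
  simp only [Ring.lie_def, LinearMap.sub_apply, Module.End.mul_apply, vanishingCycleEndo_apply,
    map_smul, hswap, smul_add, smul_smul]
  match_scalars <;> ring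

theorem vanishingCycleEndo_smul_add_smul (halt : ψ.IsAlt) {δ ε : V} (hpair : ψ ε δ ≠ 0)
    (a b : k) :
    vanishingCycleEndo ψ (a • δ + b • ε) =
      (a * a) • vanishingCycleEndo ψ δ + (b * b) • vanishingCycleEndo ψ ε
        + (a * b / ψ ε δ) • ⁅vanishingCycleEndo ψ δ, vanishingCycleEndo ψ ε⁆ := by
  ext x
  simp only [LinearMap.add_apply, LinearMap.smul_apply, lie_vanishingCycleEndo_apply ψ halt,
    vanishingCycleEndo_apply, map_add, map_smul, smul_eq_mul, smul_add, smul_smul]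
  match_scalars <;> field_simp
  ring

end

theorem vanishingCycleEndo_mem_of_span_general
    {k V : Type*} [Field k] [AddCommGroup V] [Module k V]
    (ψ : LinearMap.BilinForm k V) (halt : ψ.IsAlt)
    (L : LieSubalgebra k (Module.End k V)) (δ' δ'' : V)
    (h' : vanishingCycleEndo ψ δ' ∈ L) (h'' : vanishingCycleEndo ψ δ'' ∈ L)
    (hpair : ψ δ'' δ' ≠ 0) :
    ∀ δ ∈ Submodule.span k ({δ', δ''} : Set V), vanishingCycleEndo ψ δ ∈ L := by
  intro δ hδ
  obtain ⟨a, b, rfl⟩ := Submodule.mem_span_pair.mp hδ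
  rw [vanishingCycleEndo_smul_add_smul ψ halt hpair]
  exact L.add_mem (L.add_mem (L.smul_mem _ h') (L.smul_mem _ h''))
    (L.smul_mem _ (L.lie_mem h' h''))

/-- Step b) in the proof of Lemma (5.11) of Deligne's Weil I: if `N_{δ'}, N_{δ''}`
belong to a Lie subalgebra `𝔏` of `End(V)` and `ψ(δ'', δ') ≠ 0` (`ψ` alternating), then
`N_δ ∈ 𝔏` for every `δ` in the span of `δ'` and `δ''`. -/
theorem vanishingCycleEndo_mem_of_span
    {k V : Type*} [Field k] [CharZero k] [AddCommGroup V] [Module k V]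
    [FiniteDimensional k V]
    (ψ : LinearMap.BilinForm k V) (halt : ψ.IsAlt)
    (L : LieSubalgebra k (Module.End k V)) (δ' δ'' : V)
    (h' : vanishingCycleEndo ψ δ' ∈ L) (h'' : vanishingCycleEndo ψ δ'' ∈ L)
    (hpair : ψ δ'' δ' ≠ 0) :
    ∀ δ ∈ Submodule.span k ({δ', δ''} : Set V), vanishingCycleEndo ψ δ ∈ L :=
  vanishingCycleEndo_mem_of_span_general ψ halt L δ' δ'' h' h'' hpair
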